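/- arXiv:2503.13929 — 2 statements merged into one kernel-verified Lean document; each statement's English description precedes it below -/
import Mathlib

section
/- The second cohomology group H²(PSL(2,ℤ); 𝕋) with trivial action is trivial; equivalently, every normalized 2-cocycle of ℤ/2ℤ * ℤ/3ℤ (the free product, isomorphic to PSL(2,ℤ)) with values in 𝕋 is cohomologous to the trivial cocycle. -/
open ComplexConjugate

namespace H2Aux

/-- nth powers of `Circle.exp`. -/
lemma circle_exp_pow (x : ℝ) (n : ℕ) : (Circle.exp x) ^ n = Circle.exp (n * x) := by
  induction n with
  | zero => simp
  | succ k ih =>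
    rw [pow_succ, ih, ← Circle.exp_add]
    congr 1
    push_cast
    ring

/-- nth roots exist in the circle group. -/
lemma exists_root (n : ℕ) (hn : n ≠ 0) (z : Circle) : ∃ w : Circle, w ^ n = z := by
  refine ⟨Circle.exp (Complex.arg z / n), ?_⟩
  rw [circle_exp_pow, mul_div_cancel₀ _ (by exact_mod_cast hn), Circle.exp_arg]

/-- A normalized 2-cocycle on a group `G` with values in `Circle`. -/
structure Cocycle (G : Type*) [Group G] where
  ω : G → G → Circle
  cocycle : ∀ g h k, ω g h * ω (g * h) k = ω g (h * k) * ω h k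
  norm : ∀ g, ω g 1 = 1 ∧ ω 1 g = 1

variable {G : Type*} [Group G]

/-- The central extension of `G` by `Circle` determined by a cocycle. -/
@[ext]
structure Ext (c : Cocycle G) where
  a : Circle
  g : G

namespace Ext

variable {c : Cocycle G}

noncomputable instance : Mul (Ext c) := ⟨fun x y => ⟨x.a * y.a * c.ω x.g y.g, x.g * y.g⟩⟩
noncomputable instance : One (Ext c) := ⟨⟨1, 1⟩⟩
noncomputable instance : Inv (Ext c) := ⟨fun x => ⟨(x.a * c.ω x.g x.g⁻¹)⁻¹, x.g⁻¹⟩⟩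

@[simp] lemma mul_a (x y : Ext c) : (x * y).a = x.a * y.a * c.ω x.g y.g := rfl
@[simp] lemma mul_g (x y : Ext c) : (x * y).g = x.g * y.g := rfl
@[simp] lemma one_a : (1 : Ext c).a = 1 := rfl
@[simp] lemma one_g : (1 : Ext c).g = 1 := rfl
@[simp] lemma inv_a (x : Ext c) : (x⁻¹).a = (x.a * c.ω x.g x.g⁻¹)⁻¹ := rfl
@[simp] lemma inv_g (x : Ext c) : (x⁻¹).g = x.g⁻¹ := rfl

noncomputable instance : Group (Ext c) where
  mul_assoc x y z := by
    have h := c.cocycle x.g y.g z.g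
    refine Ext.ext ?_ ?_
    · show x.a * y.a * c.ω x.g y.g * z.a * (c.ω (x.g * y.g) z.g)
        = x.a * (y.a * z.a * c.ω y.g z.g) * c.ω x.g (y.g * z.g)
      calc x.a * y.a * c.ω x.g y.g * z.a * (c.ω (x.g * y.g) z.g)
          = x.a * (y.a * z.a) * (c.ω x.g y.g * c.ω (x.g * y.g) z.g) := by
            simp only [mul_comm, mul_left_comm, mul_assoc]
        _ = x.a * (y.a * z.a) * (c.ω x.g (y.g * z.g) * c.ω y.g z.g) := by rw [h]
        _ = x.a * (y.a * z.a * c.ω y.g z.g) * c.ω x.g (y.g * z.g) := by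
            simp only [mul_comm, mul_left_comm, mul_assoc]
    · exact mul_assoc _ _ _
  one_mul x := by
    refine Ext.ext ?_ ?_
    · simp [(c.norm x.g).2]
    · simp
  mul_one x := by
    refine Ext.ext ?_ ?_
    · simp [(c.norm x.g).1]
    · simp
  inv_mul_cancel x := by
    have hsym : c.ω x.g x.g⁻¹ = c.ω x.g⁻¹ x.g := by
      have h := c.cocycle x.g x.g⁻¹ x.g
      simpa [(c.norm x.g).1, (c.norm x.g).2] using h
    refine Ext.ext ?_ ?_
    · show (x.a * c.ω x.g x.g⁻¹)⁻¹ * x.a * c.ω x.g⁻¹ x.g = 1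
      rw [← hsym, mul_inv_rev]
      calc (c.ω x.g x.g⁻¹)⁻¹ * x.a⁻¹ * x.a * c.ω x.g x.g⁻¹
          = ((c.ω x.g x.g⁻¹)⁻¹ * c.ω x.g x.g⁻¹) * (x.a⁻¹ * x.a) := by
            simp only [mul_comm, mul_left_comm, mul_assoc]
        _ = 1 := by simp
    · simp

/-- Projection to `G` as a monoid hom. -/
noncomputable def proj : Ext c →* G where
  toFun := Ext.g
  map_one' := rfl
  map_mul' _ _ := rfl

end Ext

/-- Hom out of `Multiplicative (ZMod n)` determined by an element of order dividing `n`. -/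
noncomputable def zmodHom {M : Type*} [Monoid M] (n : ℕ) [NeZero n] (t : M) (ht : t ^ n = 1) :
    Multiplicative (ZMod n) →* M where
  toFun m := t ^ (m.toAdd.val)
  map_one' := by simp
  map_mul' x y := by
    show t ^ (x.toAdd + y.toAdd).val = t ^ x.toAdd.val * t ^ y.toAdd.val
    rw [ZMod.val_add, ← pow_eq_pow_mod _ ht, pow_add]

end H2Aux

open H2Aux

/-- `H²(PSL(2,ℤ); 𝕋)` is trivial: every normalized 2-cocycle of the
free product `ℤ/2ℤ * ℤ/3ℤ` (which is isomorphic to `PSL(2,ℤ)`) with values in the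
circle group `𝕋` (with trivial action) is cohomologous to the trivial cocycle, i.e.
it is a coboundary. -/
theorem h2_pslTwoZ_trivial
    (ω : Monoid.Coprod (Multiplicative (ZMod 2)) (Multiplicative (ZMod 3)) →
         Monoid.Coprod (Multiplicative (ZMod 2)) (Multiplicative (ZMod 3)) → Circle)
    (hω_cocycle : ∀ g h k, ω g h * ω (g * h) k = ω g (h * k) * ω h k)
    (hω_norm : ∀ g, ω g 1 = 1 ∧ ω 1 g = 1) :
    ∃ φ : Monoid.Coprod (Multiplicative (ZMod 2)) (Multiplicative (ZMod 3)) → Circle,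
      φ 1 = 1 ∧ ∀ g h, (ω g h : ℂ) = (φ (g * h) : ℂ) * conj (φ g : ℂ) * conj (φ h : ℂ) := by
  let c : Cocycle (Monoid.Coprod (Multiplicative (ZMod 2)) (Multiplicative (ZMod 3))) :=
    ⟨ω, hω_cocycle, hω_norm⟩
  -- generators
  let xA : Multiplicative (ZMod 2) := Multiplicative.ofAdd 1
  let xB : Multiplicative (ZMod 3) := Multiplicative.ofAdd 1
  let gA := Monoid.Coprod.inl (N := Multiplicative (ZMod 3)) xA
  let gB := Monoid.Coprod.inr (M := Multiplicative (ZMod 2)) xB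
  -- roots
  obtain ⟨a, ha⟩ := exists_root 2 (by norm_num) (ω gA gA)⁻¹
  obtain ⟨b, hb⟩ := exists_root 3 (by norm_num) (ω gB gB * ω (gB * gB) gB)⁻¹
  -- lifted generators
  let tA : Ext c := ⟨a, gA⟩
  let tB : Ext c := ⟨b, gB⟩
  have hxA2 : xA * xA = 1 := by decide
  have hxB3 : xB * xB * xB = 1 := by decide
  have htA : tA ^ 2 = 1 := by
    rw [pow_two]
    refine Ext.ext ?_ ?_
    · show a * a * ω gA gA = 1
      have h2 : a * a = (ω gA gA)⁻¹ := by rw [← pow_two]; exact ha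
      rw [h2, inv_mul_cancel]
    · show gA * gA = 1
      rw [← map_mul, hxA2, map_one]
  have htB : tB ^ 3 = 1 := by
    rw [pow_succ, pow_two]
    refine Ext.ext ?_ ?_
    · show b * b * ω gB gB * b * ω (gB * gB) gB = 1
      have h3 : b * b * b = (ω gB gB * ω (gB * gB) gB)⁻¹ := by
        rw [← hb, pow_succ, pow_two]
      calc b * b * ω gB gB * b * ω (gB * gB) gB
          = (b * b * b) * (ω gB gB * ω (gB * gB) gB) := by
            simp only [mul_comm, mul_left_comm, mul_assoc]
        _ = 1 := by rw [h3, inv_mul_cancel]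
    · show gB * gB * gB = 1
      rw [← map_mul, ← map_mul, hxB3, map_one]
  -- splittings and the global section
  let sA : Multiplicative (ZMod 2) →* Ext c := zmodHom 2 tA htA
  let sB : Multiplicative (ZMod 3) →* Ext c := zmodHom 3 tB htB
  let s := Monoid.Coprod.lift sA sB
  have pow_g : ∀ (t : Ext c) (k : ℕ), (t ^ k).g = t.g ^ k := by
    intro t k
    induction k with
    | zero => rfl
    | succ j ih => rw [pow_succ, pow_succ, Ext.mul_g, ih]
  -- s is a section of the projection
  have hsec : ∀ g, (s g).g = g := by
    have key : (Ext.proj (c := c)).comp s = MonoidHom.id _ := by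
      apply Monoid.Coprod.hom_ext
      · refine MonoidHom.ext fun m => ?_
        show (s (Monoid.Coprod.inl m)).g = Monoid.Coprod.inl m
        have : s (Monoid.Coprod.inl m) = sA m := Monoid.Coprod.lift_apply_inl sA sB m
        rw [this]
        show (tA ^ (m.toAdd.val)).g = Monoid.Coprod.inl m
        rw [pow_g]
        show (Monoid.Coprod.inl (N := Multiplicative (ZMod 3)) xA) ^ m.toAdd.val = _
        rw [← map_pow]
        congr 1
        show Multiplicative.ofAdd (1 : ZMod 2) ^ m.toAdd.val = m
        rw [← ofAdd_nsmul]
        simp [nsmul_eq_mul, ZMod.natCast_val, ZMod.cast_id]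
      · refine MonoidHom.ext fun m => ?_
        show (s (Monoid.Coprod.inr m)).g = Monoid.Coprod.inr m
        have : s (Monoid.Coprod.inr m) = sB m := Monoid.Coprod.lift_apply_inr sA sB m
        rw [this]
        show (tB ^ (m.toAdd.val)).g = Monoid.Coprod.inr m
        rw [pow_g]
        show (Monoid.Coprod.inr (M := Multiplicative (ZMod 2)) xB) ^ m.toAdd.val = _
        rw [← map_pow]
        congr 1
        show Multiplicative.ofAdd (1 : ZMod 3) ^ m.toAdd.val = m
        rw [← ofAdd_nsmul]
        simp [nsmul_eq_mul, ZMod.natCast_val, ZMod.cast_id]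
    intro g
    exact DFunLike.congr_fun key g
  refine ⟨fun g => (s g).a, ?_, ?_⟩
  · show (s 1).a = 1
    rw [map_one]
    rfl
  · intro g h
    have hA : (s (g * h)).a = (s g).a * (s h).a * ω (s g).g (s h).g :=
      congrArg Ext.a (map_mul s g h)
    rw [hsec g, hsec h] at hA
    have h1 : ((s (g * h)).a : ℂ) = ((s g).a : ℂ) * ((s h).a : ℂ) * (ω g h : ℂ) := by
      rw [hA]; push_cast; ring
    have c1 : ((s g).a : ℂ) * conj ((s g).a : ℂ) = 1 := by
      rw [← Circle.coe_inv_eq_conj, ← Circle.coe_mul, mul_inv_cancel, Circle.coe_one]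
    have c2 : ((s h).a : ℂ) * conj ((s h).a : ℂ) = 1 := by
      rw [← Circle.coe_inv_eq_conj, ← Circle.coe_mul, mul_inv_cancel, Circle.coe_one]
    show (ω g h : ℂ) = ((s (g * h)).a : ℂ) * conj ((s g).a : ℂ) * conj ((s h).a : ℂ)
    rw [h1]
    calc (ω g h : ℂ)
        = (ω g h : ℂ) * 1 * 1 := by ring
      _ = (ω g h : ℂ) * (((s g).a : ℂ) * conj ((s g).a : ℂ))
            * (((s h).a : ℂ) * conj ((s h).a : ℂ)) := by rw [c1, c2]
      _ = ((s g).a : ℂ) * ((s h).a : ℂ) * (ω g h : ℂ) * conj ((s g).a : ℂ)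
            * conj ((s h).a : ℂ) := by ring
end

section
/- Let Γ be a countable discrete group and K a finite normal subgroup. If H is a Hilbert space module over the group von Neumann algebra L(Γ/K), then H is naturally a module over L(Γ) via the quotient map, and dim_{L(Γ)} H = (1/|K|) · dim_{L(Γ/K)} H. -/
/-!
Write `ξ n γ = u* (e_n ⊗ δ_γ)` and `η m x = w* (e_m ⊗ δ_x)`. As `u` and `w` are isometries,
Parseval expands `‖η m 1‖²` and `‖ξ n 1‖²` in the matrix coefficients `⟪ξ n γ, η m x⟫`.
Equivariance gives `ξ n γ = act (γK) (ξ n 1)` and `η m x = act x (η m 1)`, and `act` is unitary,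
so `|⟪ξ n γ⁻¹, η m 1⟫| = |⟪η m γK, ξ n 1⟫|`. Summing over `γ ∈ Γ` visits every coset `|K|`
times, hence `dim_{L(Γ/K)} H = |K| · dim_{L(Γ)} H`.
-/

open scoped ENNReal

noncomputable section

/-- The von Neumann dimension of a module `V` over the group von Neumann algebra
`L(A)` of a countable discrete group `A`, computed from an equivariant isometric
embedding `u : V → ℓ²(A) ⊗ ℓ²(ℕ)` as `(τ ⊗ Tr)(u u*) = Σ_n ‖u* (δ_e ⊗ e_n)‖²`. -/
def grpDimVal {A : Type*} [Group A] [Countable A] [DecidableEq A]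
    {V : Type*} [NormedAddCommGroup V] [InnerProductSpace ℂ V] [CompleteSpace V]
    (u : V →ₗᵢ[ℂ] lp (fun _ : ℕ => lp (fun _ : A => ℂ) 2) 2) : ℝ≥0∞ :=
  ∑' n : ℕ,
    (‖(ContinuousLinearMap.adjoint u.toContinuousLinearMap)
        (lp.single 2 n (lp.single 2 (1 : A) (1 : ℂ)))‖₊ : ℝ≥0∞) ^ 2

open scoped InnerProductSpace

theorem ENNReal.tsum_comp_quotientGroup_mk {Γ : Type*} [Group Γ] (K : Subgroup Γ) [Finite K]
    (f : Γ ⧸ K → ℝ≥0∞) :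
    ∑' γ : Γ, f γ = Nat.card K * ∑' x : Γ ⧸ K, f x := by
  have := Fintype.ofFinite K
  let e := Subgroup.groupEquivQuotientProdSubgroup (s := K)
  have he : ∀ p, ((e.symm p : Γ) : Γ ⧸ K) = p.1 := fun p => by
    conv_rhs => rw [← e.apply_symm_apply p]
    rfl
  rw [← e.symm.tsum_eq, ENNReal.tsum_prod', ← ENNReal.tsum_mul_left]
  simp [he, Nat.card_eq_fintype_card]

theorem lp.coe_nnnorm_sq_eq_tsum {ι : Type*} {E : ι → Type*} [∀ i, NormedAddCommGroup (E i)]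
    (f : lp E 2) : (‖f‖₊ : ℝ≥0∞) ^ 2 = ∑' i, (‖f i‖₊ : ℝ≥0∞) ^ 2 := by
  have h := lp.hasSum_norm (p := 2) (by norm_num) f
  simp only [ENNReal.toReal_ofNat, Real.rpow_two] at h
  have h' : HasSum (fun i => ‖f i‖₊ ^ 2) (‖f‖₊ ^ 2) := NNReal.hasSum_coe.mp (by simpa using h)
  exact_mod_cast (ENNReal.hasSum_coe.mpr h').tsum_eq.symm

section

variable {𝕜 : Type*} [RCLike 𝕜]
  {E : Type*} [NormedAddCommGroup E] [InnerProductSpace 𝕜 E] [CompleteSpace E]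

theorem ContinuousLinearMap.adjoint_eq_of_isometry_of_comp_eq_one
    {F : Type*} [NormedAddCommGroup F] [InnerProductSpace 𝕜 F] [CompleteSpace F]
    {T : E →L[𝕜] F} {S : F →L[𝕜] E} (hT : ∀ x, ‖T x‖ = ‖x‖) (hTS : T ∘L S = 1) :
    adjoint T = S := by
  have hTT : adjoint T ∘L T = 1 :=
    (isometry_iff_adjoint_comp_self T).mp (AddMonoidHomClass.isometry_iff_norm T |>.mpr hT)
  calc adjoint T = adjoint T ∘L (T ∘L S) := by rw [hTS]; rfl
    _ = S := by rw [← ContinuousLinearMap.comp_assoc, hTT]; rfl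

theorem lp.inner_single_single_one {ι κ : Type*} [DecidableEq ι] [DecidableEq κ]
    (f : lp (fun _ : ι => lp (fun _ : κ => 𝕜) 2) 2) (i : ι) (x : κ) :
    ⟪lp.single 2 i (lp.single 2 x (1 : 𝕜)), f⟫_𝕜 = f i x := by
  simp [lp.inner_single_left]

theorem LinearIsometry.coe_nnnorm_sq_eq_tsum_inner_adjoint_single
    {ι κ : Type*} [DecidableEq ι] [DecidableEq κ]
    (T : E →ₗᵢ[𝕜] lp (fun _ : ι => lp (fun _ : κ => 𝕜) 2) 2) (v : E) :
    (‖v‖₊ : ℝ≥0∞) ^ 2 = ∑' (i : ι) (x : κ),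
      (‖⟪ContinuousLinearMap.adjoint T.toContinuousLinearMap
        (lp.single 2 i (lp.single 2 x 1)), v⟫_𝕜‖₊ : ℝ≥0∞) ^ 2 := by
  simp_rw [ContinuousLinearMap.adjoint_inner_left, LinearIsometry.coe_toContinuousLinearMap,
    lp.inner_single_single_one, ← T.nnnorm_map v, lp.coe_nnnorm_sq_eq_tsum]

theorem ContinuousLinearMap.adjoint_single_eq_of_equivariant
    {G : Type*} [Group G] [DecidableEq G] {ι : Type*} [DecidableEq ι]
    (ρ : G → E →L[𝕜] E) (hρ : ∀ g, adjoint (ρ g) = ρ g⁻¹)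
    (T : E →L[𝕜] lp (fun _ : ι => lp (fun _ : G => 𝕜) 2) 2)
    (hT : ∀ g v i x, T (ρ g v) i x = T v i (g⁻¹ * x)) (i : ι) (g : G) :
    adjoint T (lp.single 2 i (lp.single 2 g 1)) =
      ρ g (adjoint T (lp.single 2 i (lp.single 2 1 1))) := by
  refine ext_inner_left 𝕜 fun v => ?_
  rw [adjoint_inner_right, ← adjoint_inner_left, hρ, adjoint_inner_right, ← inner_conj_symm,
    lp.inner_single_single_one, ← inner_conj_symm, lp.inner_single_single_one, hT, inv_inv,
    mul_one]

end

/-- Let `Γ` be a countable discrete group, `K ⊴ Γ` finite normal, and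
`H` a Hilbert space which is a module over `L(Γ/K)` (via a unitary representation `act`
of `Γ/K` extending normally). Then `H` is a module over `L(Γ)` through the quotient
map, and `dim_{L(Γ)} H = (1/|K|) · dim_{L(Γ/K)} H`, where the dimensions are computed
from equivariant isometric embeddings `u : H → ℓ²(Γ) ⊗ ℓ²(ℕ)` and
`w : H → ℓ²(Γ/K) ⊗ ℓ²(ℕ)`. -/
theorem vnDim_quotient_finite_normal {Γ : Type*} [Group Γ] [Countable Γ]
    [DecidableEq Γ] (K : Subgroup Γ) [K.Normal] [Finite K]
    [Countable (Γ ⧸ K)] [DecidableEq (Γ ⧸ K)]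
    {H : Type*} [NormedAddCommGroup H] [InnerProductSpace ℂ H] [CompleteSpace H]
    (act : Γ ⧸ K → H →L[ℂ] H)
    (hact_mul : ∀ q q' : Γ ⧸ K, act (q * q') = (act q).comp (act q'))
    (hact_one : act 1 = ContinuousLinearMap.id ℂ H)
    (hact_iso : ∀ q : Γ ⧸ K, ∀ v : H, ‖act q v‖ = ‖v‖)
    (u : H →ₗᵢ[ℂ] lp (fun _ : ℕ => lp (fun _ : Γ => ℂ) 2) 2)
    (hu : ∀ γ : Γ, ∀ v : H, ∀ n : ℕ, ∀ x : Γ,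
      (u (act (QuotientGroup.mk γ) v) n) x = (u v n) (γ⁻¹ * x))
    (w : H →ₗᵢ[ℂ] lp (fun _ : ℕ => lp (fun _ : Γ ⧸ K => ℂ) 2) 2)
    (hw : ∀ q : Γ ⧸ K, ∀ v : H, ∀ n : ℕ, ∀ y : Γ ⧸ K,
      (w (act q v) n) y = (w v n) (q⁻¹ * y)) :
    grpDimVal u = (Nat.card K : ℝ≥0∞)⁻¹ * grpDimVal w := by
  have hact : ∀ q, (act q).adjoint = act q⁻¹ := fun q =>
    ContinuousLinearMap.adjoint_eq_of_isometry_of_comp_eq_one (hact_iso q)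
      (by rw [← hact_mul, mul_inv_cancel, hact_one]; rfl)
  set ξ : ℕ → Γ → H := fun n γ =>
    u.toContinuousLinearMap.adjoint (lp.single 2 n (lp.single 2 γ 1))
  set η : ℕ → Γ ⧸ K → H := fun m x =>
    w.toContinuousLinearMap.adjoint (lp.single 2 m (lp.single 2 x 1))
  have hξ : ∀ n γ, ξ n γ = act γ (ξ n 1) :=
    (u.toContinuousLinearMap).adjoint_single_eq_of_equivariant (fun γ : Γ => act γ)
      (fun γ => by simpa using hact γ) hu
  have hη : ∀ m x, η m x = act x (η m 1) :=
    (w.toContinuousLinearMap).adjoint_single_eq_of_equivariant act hact hw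
  have hcoeff : ∀ n m (γ : Γ), ‖⟪ξ n γ⁻¹, η m 1⟫_ℂ‖₊ = ‖⟪η m γ, ξ n 1⟫_ℂ‖₊ := fun n m γ => by
    rw [hξ, ← ContinuousLinearMap.adjoint_inner_right, hact, QuotientGroup.mk_inv, inv_inv,
      ← hη]
    exact NNReal.eq (norm_inner_symm _ _)
  suffices grpDimVal w = Nat.card K * grpDimVal u by
    rw [this, ← mul_assoc, ENNReal.inv_mul_cancel (by simpa using Nat.card_pos.ne') (by simp),
      one_mul]
  calc grpDimVal w = ∑' (m : ℕ) (n : ℕ) (γ : Γ), (‖⟪ξ n γ⁻¹, η m 1⟫_ℂ‖₊ : ℝ≥0∞) ^ 2 := by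
        refine tsum_congr fun m => ?_
        rw [u.coe_nnnorm_sq_eq_tsum_inner_adjoint_single]
        exact tsum_congr fun n => ((Equiv.inv Γ).tsum_eq _).symm
    _ = ∑' (m : ℕ) (n : ℕ), Nat.card K * ∑' x : Γ ⧸ K, (‖⟪η m x, ξ n 1⟫_ℂ‖₊ : ℝ≥0∞) ^ 2 := by
        refine tsum_congr fun m => tsum_congr fun n => ?_
        simp_rw [hcoeff]
        exact ENNReal.tsum_comp_quotientGroup_mk K fun x => (‖⟪η m x, ξ n 1⟫_ℂ‖₊ : ℝ≥0∞) ^ 2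
    _ = Nat.card K * grpDimVal u := by
        simp_rw [ENNReal.tsum_mul_left, grpDimVal,
          w.coe_nnnorm_sq_eq_tsum_inner_adjoint_single]
        rw [ENNReal.tsum_comm]
end
end
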